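/- arXiv:math/9412203 — 6 statements merged into one kernel-verified Lean document; each statement's English description precedes it below -/
import Mathlib

section
/- Let H be a subgroup of F, let T be a Schreier transversal for H, and let w ∈ H with w ≠ 1. Let u be the longest element of T that is a prefix of the reduced word of w, and let v be the longest element of T that is a prefix of the reduced word of w⁻¹. Then l(u) + l(v) < l(w). -/
/-!
If `l(u) + l(v) ≥ l(w)`, the prefix `u` of `w` and the prefix `v` of `w⁻¹` overlap: writing
`w = p · v⁻¹` as reduced words, `p` has length `l(w) - l(v) ≤ l(u)`, so it is a prefix of `u`
and lies in `T`. Then `p v⁻¹ = w ∈ H`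
puts `p` and `v` in the same coset, so `p = v` and `w = 1`.
-/

open FreeGroup

/-- A Schreier transversal for a subgroup `H` of the free group on `Fin n`:
a set of representatives, exactly one for each right coset `Hg`, closed under
taking initial segments (prefixes) of reduced words. -/
def IsSchreierTransversal {n : ℕ} (H : Subgroup (FreeGroup (Fin n)))
    (T : Set (FreeGroup (Fin n))) : Prop :=
  (∀ g : FreeGroup (Fin n), ∃! t, t ∈ T ∧ g * t⁻¹ ∈ H) ∧
  (∀ t ∈ T, ∀ k : ℕ, FreeGroup.mk ((FreeGroup.toWord t).take k) ∈ T)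

theorem List.IsPrefix.take_eq_take {α : Type*} {l₁ l₂ : List α} (h : l₁ <+: l₂) {k : ℕ}
    (hk : k ≤ l₁.length) : l₁.take k = l₂.take k := by
  rw [List.prefix_iff_eq_take.mp h, List.take_take, min_eq_left hk]

namespace FreeGroup

variable {α : Type*} [DecidableEq α]

theorem eq_mk_take_mul_inv_of_isPrefix {v w : FreeGroup α} (hv : v.toWord <+: w⁻¹.toWord) :
    w = mk (w.toWord.take (w.norm - v.norm)) * v⁻¹ := by
  have hvw : v.norm ≤ w.norm := norm_inv_eq (x := w) ▸ hv.length_le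
  have hsuffix : v.toWord = invRev (w.toWord.drop (w.norm - v.norm)) := by
    have hlen : (invRev (w.toWord.drop (w.norm - v.norm))).length = v.toWord.length := by
      rw [invRev_length, List.length_drop]
      exact Nat.sub_sub_self hvw
    rw [toWord_inv, ← List.take_append_drop (w.norm - v.norm) w.toWord, invRev_append,
      List.prefix_iff_eq_take, ← hlen, List.take_left] at hv
    exact hv
  calc w = mk (w.toWord.take (w.norm - v.norm)) * mk (w.toWord.drop (w.norm - v.norm)) := by
        rw [mul_mk, List.take_append_drop, mk_toWord]
    _ = mk (w.toWord.take (w.norm - v.norm)) * v⁻¹ := by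
        rw [← invRev_invRev (L₁ := w.toWord.drop _), ← hsuffix, ← inv_mk, mk_toWord]

end FreeGroup

theorem IsSchreierTransversal.eq_of_mul_inv_mem {n : ℕ} {H : Subgroup (FreeGroup (Fin n))}
    {T : Set (FreeGroup (Fin n))} (hT : IsSchreierTransversal H T) {t₁ t₂ : FreeGroup (Fin n)}
    (ht₁ : t₁ ∈ T) (ht₂ : t₂ ∈ T) (h : t₁ * t₂⁻¹ ∈ H) : t₁ = t₂ :=
  (hT.1 t₁).unique ⟨ht₁, by simp [H.one_mem]⟩ ⟨ht₂, h⟩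

theorem prefix_length_lt_general {n : ℕ} (H : Subgroup (FreeGroup (Fin n)))
    (T : Set (FreeGroup (Fin n))) (hT : IsSchreierTransversal H T)
    (w : FreeGroup (Fin n)) (hwH : w ∈ H) (hw1 : w ≠ 1)
    (u v : FreeGroup (Fin n))
    (huT : u ∈ T) (hupre : u.toWord <+: w.toWord)
    (hvT : v ∈ T) (hvpre : v.toWord <+: w⁻¹.toWord) :
    FreeGroup.norm u + FreeGroup.norm v < FreeGroup.norm w := by
  by_contra! hlong
  have hw : w = mk (w.toWord.take (w.norm - v.norm)) * v⁻¹ := eq_mk_take_mul_inv_of_isPrefix hvpre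
  have hpT : mk (w.toWord.take (w.norm - v.norm)) ∈ T := by
    have hk : w.norm - v.norm ≤ u.toWord.length := by
      simp only [FreeGroup.norm] at hlong ⊢
      omega
    rw [← hupre.take_eq_take hk]
    exact hT.2 u huT _
  have hpv := hT.eq_of_mul_inv_mem hpT hvT (hw ▸ hwH)
  exact hw1 (by rw [hw, hpv, mul_inv_cancel])

/-- If `u` is the longest element of `T` which is a prefix of the reduced word of
`w ∈ H \ {1}` and `v` is the longest element of `T` which is a prefix of the
reduced word of `w⁻¹`, then `l(u) + l(v) < l(w)`. -/
theorem prefix_length_lt {n : ℕ} (hn : 1 ≤ n) (H : Subgroup (FreeGroup (Fin n)))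
    (T : Set (FreeGroup (Fin n))) (hT : IsSchreierTransversal H T)
    (w : FreeGroup (Fin n)) (hwH : w ∈ H) (hw1 : w ≠ 1)
    (u v : FreeGroup (Fin n))
    (huT : u ∈ T) (hupre : u.toWord <+: w.toWord)
    (humax : ∀ u' ∈ T, u'.toWord <+: w.toWord → FreeGroup.norm u' ≤ FreeGroup.norm u)
    (hvT : v ∈ T) (hvpre : v.toWord <+: w⁻¹.toWord)
    (hvmax : ∀ v' ∈ T, v'.toWord <+: w⁻¹.toWord → FreeGroup.norm v' ≤ FreeGroup.norm v) :
    FreeGroup.norm u + FreeGroup.norm v < FreeGroup.norm w :=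
  prefix_length_lt_general H T hT w hwH hw1 u v huT hupre hvT hvpre
end

section
/- Let H be a subgroup of F and let T be a Schreier transversal for H with coset map φ. Then rank(H) equals the cardinality of the set {(t, x) ∈ T × X : t·x ≠ φ(t·x)}, i.e. the cardinality of the set of nontrivial Schreier generators t·x·φ(t·x)⁻¹. -/
/-!
Let `S` be the set of nontrivial Schreier pairs. The Reidemeister–Schreier rewriting process is a
cocycle `τ` for the action of `F` on `T` with values in `F(S)`; it comes for free from the universal
property of `F`, by mapping into the wreath product `(T → F(S)) ⋊ Perm T`. Since `T` is prefix
closed, the paths from `1` to the points of `T` form a spanning tree of the Schreier graph all of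
whose edges are trivial Schreier pairs, so `τ` vanishes on them. Hence `h ↦ τ h 1` sends each
Schreier generator to the corresponding free generator, and comparing two cocycles on the
generators of `F` shows that it is inverse to the evaluation map `F(S) → H`. So `H ≅ F(S)`, and
isomorphic free groups have bases of the same cardinality.
-/

open FreeGroup

/-- `B` is a free basis of the subgroup `H`: `B ⊆ H` and the induced homomorphism
from the free group on `B` to `H` is an isomorphism. -/
def IsFreeBasis {G : Type*} [Group G] (H : Subgroup G) (B : Set G) : Prop :=
  ∃ hB : ∀ b ∈ B, b ∈ H,
    Function.Bijective (FreeGroup.lift (fun b : B => (⟨(b : G), hB b b.2⟩ : H)))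

namespace Schreier

variable {G T K : Type*} [Group G] [Group K]

def IsCocycle (σ : G →* Equiv.Perm T) (τ : G → T → K) : Prop :=
  ∀ g h t, τ (g * h) t = τ g (σ h t) * τ h t

namespace IsCocycle

variable {σ : G →* Equiv.Perm T} {τ : G → T → K}

lemma map_one (hτ : IsCocycle σ τ) (t : T) : τ 1 t = 1 := by
  simpa using hτ 1 1 t

lemma map_inv (hτ : IsCocycle σ τ) (g : G) (t : T) : τ g⁻¹ t = (τ g (σ g⁻¹ t))⁻¹ :=
  eq_inv_of_mul_eq_one_right <| by rw [← hτ, mul_inv_cancel, hτ.map_one]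

lemma comp {K' : Type*} [Group K'] (hτ : IsCocycle σ τ) (f : K →* K') :
    IsCocycle σ fun g t => f (τ g t) := fun g h t => by
  simp only [hτ g h t, _root_.map_mul]

lemma ext {X : Type*} {σ : FreeGroup X →* Equiv.Perm T} {τ₁ τ₂ : FreeGroup X → T → K}
    (h₁ : IsCocycle σ τ₁) (h₂ : IsCocycle σ τ₂) (h : ∀ x t, τ₁ (of x) t = τ₂ (of x) t) :
    τ₁ = τ₂ := by
  funext g
  induction g with
  | C1 => funext t; rw [h₁.map_one, h₂.map_one]
  | of x => funext t; exact h x t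
  | inv_of x _ => funext t; rw [h₁.map_inv, h₂.map_inv, h]
  | mul g g' ih ih' => funext t; rw [h₁, h₂, ih, ih']

end IsCocycle

lemma isCocycle_coboundary (σ : G →* Equiv.Perm T) (ι : T → G) :
    IsCocycle σ fun g t => ι (σ g t) * g * (ι t)⁻¹ := fun g h t => by
  simp only [_root_.map_mul, Equiv.Perm.mul_apply]
  group

variable {X : Type*}

noncomputable def cocycleLiftHom (σ : FreeGroup X →* Equiv.Perm T) (c : X → T → K) :
    FreeGroup X →* (T → K) ⋊[mulAutArrow] Equiv.Perm T :=
  FreeGroup.lift fun x => ⟨fun t => c x ((σ (of x))⁻¹ t), σ (of x)⟩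

lemma cocycleLiftHom_right (σ : FreeGroup X →* Equiv.Perm T) (c : X → T → K) (g : FreeGroup X) :
    (cocycleLiftHom σ c g).right = σ g :=
  DFunLike.congr_fun (ext_hom (SemidirectProduct.rightHom.comp (cocycleLiftHom σ c)) σ
    fun x => by simp [cocycleLiftHom]) g

noncomputable def cocycleLift (σ : FreeGroup X →* Equiv.Perm T) (c : X → T → K) :
    FreeGroup X → T → K :=
  fun g t => (cocycleLiftHom σ c g).left (σ g t)

lemma isCocycle_cocycleLift (σ : FreeGroup X →* Equiv.Perm T) (c : X → T → K) :
    IsCocycle σ (cocycleLift σ c) := by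
  intro g h t
  simp only [cocycleLift, _root_.map_mul, SemidirectProduct.mul_left, cocycleLiftHom_right,
    Pi.mul_apply, Equiv.Perm.mul_apply, mulAutArrow_apply_apply]
  exact congrArg (_ * ·) (congrArg _ ((σ g).symm_apply_apply _))

lemma cocycleLift_of (σ : FreeGroup X →* Equiv.Perm T) (c : X → T → K) (x : X) (t : T) :
    cocycleLift σ c (of x) t = c x t := by
  simp [cocycleLift, cocycleLiftHom]

end Schreier

namespace IsSchreierTransversal

open Schreier

variable {n : ℕ} {H : Subgroup (FreeGroup (Fin n))} {T : Set (FreeGroup (Fin n))}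
  {φ : FreeGroup (Fin n) → FreeGroup (Fin n)}

section CosetMap

variable (hT : IsSchreierTransversal H T) (hφ : ∀ g, φ g ∈ T ∧ g * (φ g)⁻¹ ∈ H)
include hT hφ

lemma coset_eq {g t : FreeGroup (Fin n)} (ht : t ∈ T) (hgt : g * t⁻¹ ∈ H) : φ g = t :=
  (hT.1 g).unique (hφ g) ⟨ht, hgt⟩

lemma coset_of_mem {t : FreeGroup (Fin n)} (ht : t ∈ T) : φ t = t :=
  hT.coset_eq hφ ht (by simp [one_mem])

lemma coset_coset_mul (u v : FreeGroup (Fin n)) : φ (φ u * v) = φ (u * v) :=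
  hT.coset_eq hφ (hφ _).1 <| by
    have h : φ u * v * (φ (u * v))⁻¹ = (u * (φ u)⁻¹)⁻¹ * (u * v * (φ (u * v))⁻¹) := by group
    exact h ▸ mul_mem (inv_mem (hφ u).2) (hφ _).2

lemma one_mem : (1 : FreeGroup (Fin n)) ∈ T := by
  simpa [← FreeGroup.one_eq_mk] using hT.2 (φ 1) (hφ 1).1 0

lemma coset_eq_one {h : FreeGroup (Fin n)} (hh : h ∈ H) : φ h = 1 :=
  hT.coset_eq hφ (hT.one_mem hφ) (by simpa using hh)

/-- The right action of `F` on the cosets `Hg`, read on their representatives and turned into a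
left action by inverting. -/
def cosetPerm : FreeGroup (Fin n) →* Equiv.Perm T where
  toFun g :=
    { toFun t := ⟨φ (t * g⁻¹), (hφ _).1⟩
      invFun t := ⟨φ (t * g), (hφ _).1⟩
      left_inv t := Subtype.ext <| by
        simp only [hT.coset_coset_mul hφ, inv_mul_cancel_right, hT.coset_of_mem hφ t.2]
      right_inv t := Subtype.ext <| by
        simp only [hT.coset_coset_mul hφ, mul_inv_cancel_right, hT.coset_of_mem hφ t.2] }
  map_one' := Equiv.ext fun t => Subtype.ext <| by simp [hT.coset_of_mem hφ t.2]
  map_mul' g h := Equiv.ext fun t => Subtype.ext <| by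
    simp [hT.coset_coset_mul hφ, mul_assoc]

@[simp]
lemma coe_cosetPerm_apply (g : FreeGroup (Fin n)) (t : T) :
    (hT.cosetPerm hφ g t : FreeGroup (Fin n)) = φ (t * g⁻¹) := rfl

end CosetMap

variable (T φ) in
abbrev SchreierIndex : Type :=
  {p : FreeGroup (Fin n) × Fin n // p.1 ∈ T ∧ p.1 * of p.2 ≠ φ (p.1 * of p.2)}

def schreierGen (s : SchreierIndex T φ) : FreeGroup (Fin n) :=
  s.1.1 * of s.1.2 * (φ (s.1.1 * of s.1.2))⁻¹

variable (T φ) in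
open scoped Classical in
/-- The label of the edge `u ⟶ φ (u * x)` of the Schreier graph. -/
noncomputable def schreierLetter (u : FreeGroup (Fin n)) (x : Fin n) :
    FreeGroup (SchreierIndex T φ) :=
  if h : u ∈ T ∧ u * of x ≠ φ (u * of x) then of ⟨(u, x), h⟩ else 1

lemma schreierLetter_eq_one {u : FreeGroup (Fin n)} {x : Fin n} (h : u * of x = φ (u * of x)) :
    schreierLetter T φ u x = 1 :=
  dif_neg fun h' => h'.2 h

lemma lift_schreierLetter {u : FreeGroup (Fin n)} (hu : u ∈ T) (x : Fin n) :
    FreeGroup.lift schreierGen (schreierLetter T φ u x) = u * of x * (φ (u * of x))⁻¹ := by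
  by_cases h : u * of x = φ (u * of x)
  · rw [schreierLetter_eq_one h, _root_.map_one, ← h, mul_inv_cancel]
  · rw [schreierLetter, dif_pos ⟨hu, h⟩, lift_apply_of, schreierGen]

variable (hT : IsSchreierTransversal H T) (hφ : ∀ g, φ g ∈ T ∧ g * (φ g)⁻¹ ∈ H)

/-- The Reidemeister–Schreier rewriting process: `rewriting g t` is the word in the Schreier
generators read along the path labelled `g` that ends at `t` in the Schreier graph. -/
noncomputable def rewriting : FreeGroup (Fin n) → T → FreeGroup (SchreierIndex T φ) :=
  cocycleLift (hT.cosetPerm hφ) fun x t => schreierLetter T φ (φ (t * (of x)⁻¹)) x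

lemma isCocycle_rewriting : IsCocycle (hT.cosetPerm hφ) (hT.rewriting hφ) :=
  isCocycle_cocycleLift _ _

lemma rewriting_of (x : Fin n) (t : T) :
    hT.rewriting hφ (of x) t = schreierLetter T φ (φ (t * (of x)⁻¹)) x :=
  cocycleLift_of _ _ x t

include hT hφ

lemma rewriting_of_eq_one {t : T} {x : Fin n} (h : (t : FreeGroup (Fin n)) * (of x)⁻¹ ∈ T) :
    hT.rewriting hφ (of x) t = 1 := by
  rw [rewriting_of, hT.coset_of_mem hφ h]
  exact schreierLetter_eq_one (by rw [inv_mul_cancel_right, hT.coset_of_mem hφ t.2])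

lemma rewriting_of_inv_eq_one {t : T} {x : Fin n} (h : (t : FreeGroup (Fin n)) * of x ∈ T) :
    hT.rewriting hφ (of x)⁻¹ t = 1 := by
  have hx : hT.cosetPerm hφ (of x)⁻¹ t = ⟨t * of x, h⟩ :=
    Subtype.ext <| by rw [coe_cosetPerm_apply, inv_inv, hT.coset_of_mem hφ h]
  rw [(hT.isCocycle_rewriting hφ).map_inv, hx,
    hT.rewriting_of_eq_one hφ (by rw [mul_inv_cancel_right]; exact t.2), inv_one]

lemma rewriting_mk_singleton_eq_one (a : Fin n × Bool) {t : T}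
    (h : (t : FreeGroup (Fin n)) * (mk [a])⁻¹ ∈ T) : hT.rewriting hφ (mk [a]) t = 1 := by
  obtain ⟨x, _ | _⟩ := a
  · have hx : mk [(x, false)] = (of x)⁻¹ := by simp [of, inv_mk, invRev]
    rw [hx] at h ⊢
    exact hT.rewriting_of_inv_eq_one hφ (by simpa using h)
  · exact hT.rewriting_of_eq_one hφ h

/-- Paths in the spanning tree of the Schreier graph carry the trivial label. -/
lemma rewriting_mk_self (L : List (Fin n × Bool)) (hL : ∀ L', L' <+: L → mk L' ∈ T) (t : T)
    (ht : (t : FreeGroup (Fin n)) = mk L) : hT.rewriting hφ t t = 1 := by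
  induction L using List.reverseRecOn generalizing t with
  | nil => simp [FreeGroup.one_eq_mk ▸ ht, (hT.isCocycle_rewriting hφ).map_one]
  | append_singleton L a ih =>
    have hLT : mk L ∈ T := hL L (List.prefix_append L [a])
    have hσ : hT.cosetPerm hφ (mk [a]) t = ⟨mk L, hLT⟩ := Subtype.ext <| by
      rw [coe_cosetPerm_apply, ht, ← mul_mk, mul_inv_cancel_right, hT.coset_of_mem hφ hLT]
    have htL : (t : FreeGroup (Fin n)) * (mk [a])⁻¹ = mk L := by
      rw [ht, ← mul_mk, mul_inv_cancel_right]
    rw [ht, ← mul_mk, hT.isCocycle_rewriting hφ, hσ,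
      ih (fun L' h => hL L' (h.trans (List.prefix_append L [a]))) ⟨mk L, hLT⟩ rfl,
      hT.rewriting_mk_singleton_eq_one hφ a (htL ▸ hLT), one_mul]

lemma rewriting_self (t : T) : hT.rewriting hφ t t = 1 :=
  hT.rewriting_mk_self hφ (toWord (t : FreeGroup (Fin n)))
    (fun _ h => List.prefix_iff_eq_take.1 h ▸ hT.2 t t.2 _) t mk_toWord.symm

lemma lift_rewriting (g : FreeGroup (Fin n)) (t : T) :
    FreeGroup.lift schreierGen (hT.rewriting hφ g t) =
      hT.cosetPerm hφ g t * g * (t : FreeGroup (Fin n))⁻¹ := by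
  refine congrFun (congrFun (IsCocycle.ext ((hT.isCocycle_rewriting hφ).comp _)
    (isCocycle_coboundary _ _) fun x t => ?_) g) t
  rw [rewriting_of, lift_schreierLetter (hφ _).1, hT.coset_coset_mul hφ, inv_mul_cancel_right,
    hT.coset_of_mem hφ t.2, coe_cosetPerm_apply]

noncomputable def rewritingHom : H →* FreeGroup (SchreierIndex T φ) where
  toFun h := hT.rewriting hφ h ⟨1, hT.one_mem hφ⟩
  map_one' := (hT.isCocycle_rewriting hφ).map_one _
  map_mul' h₁ h₂ := by
    have hfix : hT.cosetPerm hφ h₂ ⟨1, hT.one_mem hφ⟩ = ⟨1, hT.one_mem hφ⟩ :=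
      Subtype.ext <| by simpa using hT.coset_eq_one hφ (inv_mem h₂.2)
    rw [Subgroup.coe_mul, hT.isCocycle_rewriting hφ, hfix]

omit hT in
def schreierGenHom : FreeGroup (SchreierIndex T φ) →* H :=
  FreeGroup.lift fun s => ⟨schreierGen s, (hφ _).2⟩

lemma rewritingHom_schreierGen (s : SchreierIndex T φ) :
    hT.rewritingHom hφ (schreierGenHom hφ (of s)) = of s := by
  obtain ⟨⟨t, x⟩, htT, hs⟩ := s
  dsimp only at htT hs
  have hwT : φ (t * of x) ∈ T := (hφ _).1
  have hw : hT.cosetPerm hφ (φ (t * of x))⁻¹ ⟨1, hT.one_mem hφ⟩ = ⟨_, hwT⟩ :=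
    Subtype.ext <| by rw [coe_cosetPerm_apply, one_mul, inv_inv, hT.coset_of_mem hφ hwT]
  have hx : hT.cosetPerm hφ (of x) ⟨_, hwT⟩ = ⟨t, htT⟩ := Subtype.ext <| by
    rw [coe_cosetPerm_apply, hT.coset_coset_mul hφ, mul_inv_cancel_right, hT.coset_of_mem hφ htT]
  have hletter : hT.rewriting hφ (of x) ⟨_, hwT⟩ = of ⟨(t, x), htT, hs⟩ := by
    rw [rewriting_of, show φ (φ (t * of x) * (of x)⁻¹) = t from congrArg Subtype.val hx]
    exact dif_pos ⟨htT, hs⟩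
  rw [schreierGenHom, lift_apply_of]
  change hT.rewriting hφ (t * of x * (φ (t * of x))⁻¹) _ = _
  have hτ := hT.isCocycle_rewriting hφ
  rw [hτ, hw, hτ, hx, hT.rewriting_self hφ ⟨t, htT⟩, hτ.map_inv, hw,
    hT.rewriting_self hφ ⟨_, hwT⟩, hletter, one_mul, inv_one, mul_one]

omit hT in
lemma coe_schreierGenHom (w : FreeGroup (SchreierIndex T φ)) :
    (schreierGenHom hφ w : FreeGroup (Fin n)) = FreeGroup.lift schreierGen w :=
  DFunLike.congr_fun (ext_hom (H.subtype.comp (schreierGenHom hφ)) (FreeGroup.lift schreierGen)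
    fun _ => by simp [schreierGenHom]) w

lemma schreierGenHom_rewritingHom (h : H) : schreierGenHom hφ (hT.rewritingHom hφ h) = h :=
  Subtype.ext <| by
    rw [coe_schreierGenHom]
    refine (hT.lift_rewriting hφ h _).trans ?_
    simp [hT.coset_eq_one hφ (inv_mem h.2)]

noncomputable def schreierMulEquiv : H ≃* FreeGroup (SchreierIndex T φ) :=
  (hT.rewritingHom hφ).toMulEquiv (schreierGenHom hφ)
    (MonoidHom.ext (hT.schreierGenHom_rewritingHom hφ))
    (ext_hom _ _ (hT.rewritingHom_schreierGen hφ))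

end IsSchreierTransversal

theorem rank_eq_card_schreier_generators_general {n : ℕ}
    (H : Subgroup (FreeGroup (Fin n))) (T : Set (FreeGroup (Fin n)))
    (hT : IsSchreierTransversal H T)
    (φ : FreeGroup (Fin n) → FreeGroup (Fin n))
    (hφ : ∀ g : FreeGroup (Fin n), φ g ∈ T ∧ g * (φ g)⁻¹ ∈ H)
    (B : Set (FreeGroup (Fin n))) (hB : IsFreeBasis H B) :
    Cardinal.mk B = Cardinal.mk {p : FreeGroup (Fin n) × Fin n //
      p.1 ∈ T ∧ p.1 * FreeGroup.of p.2 ≠ φ (p.1 * FreeGroup.of p.2)} := by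
  obtain ⟨_, hbij⟩ := hB
  exact Cardinal.mk_congr <| Equiv.ofFreeGroupEquiv <|
    (MulEquiv.ofBijective _ hbij).trans (hT.schreierMulEquiv hφ)

/-- The rank of `H` equals the cardinality of the set of pairs `(t, x) ∈ T × X`
with `t·x ≠ φ(t·x)`, i.e. of the set of nontrivial Schreier generators. -/
theorem rank_eq_card_schreier_generators {n : ℕ} (hn : 1 ≤ n)
    (H : Subgroup (FreeGroup (Fin n))) (T : Set (FreeGroup (Fin n)))
    (hT : IsSchreierTransversal H T)
    (φ : FreeGroup (Fin n) → FreeGroup (Fin n))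
    (hφ : ∀ g : FreeGroup (Fin n), φ g ∈ T ∧ g * (φ g)⁻¹ ∈ H)
    (B : Set (FreeGroup (Fin n))) (hB : IsFreeBasis H B) :
    Cardinal.mk B = Cardinal.mk {p : FreeGroup (Fin n) × Fin n //
      p.1 ∈ T ∧ p.1 * FreeGroup.of p.2 ≠ φ (p.1 * FreeGroup.of p.2)} :=
  rank_eq_card_schreier_generators_general H T hT φ hφ B hB
end

section
/- Let H be a subgroup of F and T a Schreier transversal for H. The sequence r_T(i) = 1 + (n−1)·Γ_T(i) − γ_T(i+1)/2 is eventually constant if and only if H is finitely generated. -/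
open FreeGroup


/-- `Γ_T(i)`, the number of elements of the transversal `T` of length at most `i`. -/
noncomputable def GammaT {n : ℕ} (T : Set (FreeGroup (Fin n))) (i : ℕ) : ℕ :=
  Set.ncard {t ∈ T | FreeGroup.norm t ≤ i}

/-- `γ_T(i)`, the number of elements of the transversal `T` of length exactly `i`. -/
noncomputable def gammaT {n : ℕ} (T : Set (FreeGroup (Fin n))) (i : ℕ) : ℕ :=
  Set.ncard {t ∈ T | FreeGroup.norm t = i}

/-- `r_T(i) = 1 + (n−1)·Γ_T(i) − γ_T(i+1)/2`. -/
noncomputable def rT (n : ℕ) (T : Set (FreeGroup (Fin n))) (i : ℕ) : ℚ :=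
  1 + ((n : ℚ) - 1) * (GammaT T i : ℚ) - (gammaT T (i + 1) : ℚ) / 2

/-!
Read the Schreier graph of `H` through the spanning tree `T`. A pair `(t, y)` with `t ∈ T` and
`y` a letter is a tree edge going down (one for each `t ≠ 1`), a tree edge going up (one for each
`u ≠ 1` in `T`, coming from the parent of `u`) or a non-tree edge. Counting the pairs with
`‖t‖ ≤ i` gives `2 r_T(i) = #{non-tree edges (t, y) with ‖t‖ ≤ i}`, a nondecreasing sequence
that is eventually constant iff there are only finitely many non-tree edges.

By Schreier's lemma the non-tree edges yield generators of `H`. Conversely the reduced word of the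
Schreier generator of a non-tree edge crosses that edge, while free reduction only deletes
backtracking, so the reduced word of an element of `⟨S⟩` crosses only edges crossed by elements of
`S ∪ S⁻¹`. Hence there are finitely many non-tree edges iff `H` is finitely generated.
-/

namespace Subgroup.IsComplement

variable {G : Type*} [Group G] {H : Subgroup G} {R : Set G}

theorem toRightFun_eq_of_mul_inv_mem (hR : IsComplement (H : Set G) R) {g t : G} (ht : t ∈ R)
    (h : g * t⁻¹ ∈ H) : (hR.toRightFun g : G) = t :=
  congrArg Subtype.val <| (isComplement_iff_existsUnique_mul_inv_mem.mp hR g).unique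
    (hR.mul_inv_toRightFun_mem g) (y₂ := ⟨t, ht⟩) h

theorem toRightFun_of_mem (hR : IsComplement (H : Set G) R) {t : G} (ht : t ∈ R) :
    (hR.toRightFun t : G) = t :=
  hR.toRightFun_eq_of_mul_inv_mem ht (by simp [H.one_mem])

theorem toRightFun_eq_toRightFun (hR : IsComplement (H : Set G) R) {g₁ g₂ : G}
    (h : g₁ * g₂⁻¹ ∈ H) : hR.toRightFun g₁ = hR.toRightFun g₂ :=
  Subtype.ext <| hR.toRightFun_eq_of_mul_inv_mem (hR.toRightFun g₂).2 <| by
    simpa [mul_assoc] using H.mul_mem h (hR.mul_inv_toRightFun_mem g₂)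

end Subgroup.IsComplement

theorem Set.finite_iff_exists_ncard_sep_le_const {β : Type*} {s : Set β} {f : β → ℕ}
    (hf : ∀ i, {x ∈ s | f x ≤ i}.Finite) :
    s.Finite ↔ ∃ N, ∀ i, N ≤ i → {x ∈ s | f x ≤ i}.ncard = {x ∈ s | f x ≤ N}.ncard := by
  constructor
  · intro hs
    obtain ⟨N, hN⟩ := (hs.image f).bddAbove
    have hsep : ∀ i, N ≤ i → {x ∈ s | f x ≤ i} = s := fun i hi =>
      Set.sep_eq_self_iff_mem_true.mpr fun x hx => (hN ⟨x, hx, rfl⟩).trans hi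
    exact ⟨N, fun i hi => by rw [hsep i hi, hsep N le_rfl]⟩
  · rintro ⟨N, hN⟩
    refine (hf N).subset fun x hx => ?_
    have hle : {y ∈ s | f y ≤ N} ⊆ {y ∈ s | f y ≤ max N (f x)} :=
      fun y hy => ⟨hy.1, hy.2.trans (le_max_left _ _)⟩
    have heq := Set.eq_of_subset_of_ncard_le hle (hN _ (le_max_left _ _)).le (hf _)
    exact heq ▸ (⟨hx, le_max_right _ _⟩ : x ∈ {y ∈ s | f y ≤ max N (f x)})

namespace FreeGroup

variable {α : Type*}

def letter (y : α × Bool) : FreeGroup α := mk [y]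

theorem inv_letter (y : α × Bool) : (letter y)⁻¹ = letter (y.1, !y.2) := by
  simp [letter, inv_mk, invRev]

theorem letter_mul_letter_not (y : α × Bool) : letter y * letter (y.1, !y.2) = 1 := by
  rw [← inv_letter, mul_inv_cancel]

theorem letter_mul_mk (y : α × Bool) (w : List (α × Bool)) : letter y * mk w = mk (y :: w) :=
  mul_mk

def reverseEdge (e : FreeGroup α × (α × Bool)) : FreeGroup α × (α × Bool) :=
  (e.1 * letter e.2, (e.2.1, !e.2.2))

theorem reverseEdge_involutive : Function.Involutive (reverseEdge (α := α)) := fun e => by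
  simp [reverseEdge, mul_assoc, ← inv_letter]

def nonTreeEdges (T : Set (FreeGroup α)) : Set (FreeGroup α × (α × Bool)) :=
  {e | e.1 ∈ T ∧ e.1 * letter e.2 ∉ T}

variable [DecidableEq α]

@[simp]
theorem toWord_letter (y : α × Bool) : (letter y).toWord = [y] := by
  simp [letter, toWord_mk]

theorem toWord_mk_of_append_eq {g : FreeGroup α} {A B : List (α × Bool)}
    (h : g.toWord = A ++ B) : (mk A).toWord = A := by
  rw [toWord_mk]
  exact (isReduced_toWord.infix ⟨[], B, h.symm⟩).reduce_eq

theorem toWord_mul_letter_of_isReduced {g : FreeGroup α} {y : α × Bool}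
    (h : IsReduced (g.toWord ++ [y])) : (g * letter y).toWord = g.toWord ++ [y] := by
  rw [toWord_mul, toWord_letter, h.reduce_eq]

theorem toWord_mul_letter_of_eq_append {g : FreeGroup α} {A : List (α × Bool)} {y : α × Bool}
    (h : g.toWord = A ++ [(y.1, !y.2)]) : (g * letter y).toWord = A := by
  obtain ⟨x, b⟩ := y
  have hstep : Red.Step (A ++ (x, !b) :: (x, !!b) :: []) (A ++ []) := Red.Step.not
  rw [Bool.not_not, List.append_nil] at hstep
  rw [toWord_mul, toWord_letter, h, List.append_assoc, List.singleton_append,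
    reduce.Step.eq hstep, ← toWord_mk, toWord_mk_of_append_eq h]

theorem toWord_mul_letter_or (g : FreeGroup α) (y : α × Bool) :
    (g * letter y).toWord = g.toWord ++ [y] ∨
      g.toWord = (g * letter y).toWord ++ [(y.1, !y.2)] := by
  rcases List.eq_nil_or_concat g.toWord with hg | ⟨A, z, hg⟩
  · left
    exact toWord_mul_letter_of_isReduced (by simp [hg, IsReduced.singleton])
  rw [List.concat_eq_append] at hg
  by_cases hz : z = (y.1, !y.2)
  · right
    rw [toWord_mul_letter_of_eq_append (hg.trans (by rw [hz])), hg, hz]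
  · left
    refine toWord_mul_letter_of_isReduced (isReduced_toWord.append IsReduced.singleton ?_)
    simp only [hg, List.getLast?_concat, Option.mem_def, Option.some.injEq, List.head?_cons]
    rintro _ rfl _ rfl h1
    obtain ⟨z1, z2⟩ := z
    cases z2 <;> cases h : y.2 <;> simp_all [Prod.ext_iff]

theorem norm_mul_letter_lt_iff {g : FreeGroup α} {y : α × Bool} :
    norm (g * letter y) < norm g ↔ g.toWord = (g * letter y).toWord ++ [(y.1, !y.2)] := by
  refine ⟨fun hlt => (toWord_mul_letter_or g y).resolve_left fun h => ?_, fun h => ?_⟩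
  · simp [norm, h] at hlt
  · simp [norm, h]

theorem norm_mul_letter_eq_or (g : FreeGroup α) (y : α × Bool) :
    norm (g * letter y) = norm g + 1 ∨ norm g = norm (g * letter y) + 1 := by
  rcases toWord_mul_letter_or g y with h | h <;> simp [norm, h]

theorem existsUnique_norm_mul_letter_lt {g : FreeGroup α} (hg : g ≠ 1) :
    ∃! y : α × Bool, norm (g * letter y) < norm g := by
  obtain ⟨A, ⟨x, b⟩, hA⟩ := (List.eq_nil_or_concat g.toWord).resolve_left (by simpa using hg)
  rw [List.concat_eq_append] at hA
  refine ⟨(x, !b), ?_, fun y (hy : norm _ < _) => ?_⟩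
  · show norm _ < _
    rw [norm_mul_letter_lt_iff, toWord_mul_letter_of_eq_append (by simpa using hA), hA]
    simp
  · rw [norm_mul_letter_lt_iff, hA] at hy
    have := (List.append_inj' hy rfl).2
    simp_all [Prod.ext_iff]

def descendingEdges (B : Set (FreeGroup α)) : Set (FreeGroup α × (α × Bool)) :=
  {e | e.1 ∈ B ∧ norm (e.1 * letter e.2) < norm e.1}

theorem ncard_descendingEdges (B : Set (FreeGroup α)) :
    (descendingEdges B).ncard = (B \ {1}).ncard := by
  have hne : ∀ e : FreeGroup α × (α × Bool), norm (e.1 * letter e.2) < norm e.1 → e.1 ≠ 1 :=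
    fun e he h1 => by simp [h1] at he
  have hinj : Set.InjOn Prod.fst (descendingEdges B) := fun e he e' he' h => Prod.ext h <|
    (existsUnique_norm_mul_letter_lt (hne e he.2)).unique he.2 (h ▸ he'.2)
  rw [← hinj.ncard_image]
  congr 1
  ext g
  constructor
  · rintro ⟨e, ⟨hB, hlt⟩, rfl⟩
    exact ⟨hB, hne e hlt⟩
  · rintro ⟨hB, hg⟩
    obtain ⟨y, hy, -⟩ := existsUnique_norm_mul_letter_lt hg
    exact ⟨(g, y), ⟨hB, hy⟩, rfl⟩

theorem finite_setOf_norm_le [Finite α] (i : ℕ) : {g : FreeGroup α | norm g ≤ i}.Finite :=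
  (List.finite_length_le (α × Bool) i).preimage toWord_injective.injOn

theorem ncard_sep_norm_le_succ [Finite α] (T : Set (FreeGroup α)) (i : ℕ) :
    {t ∈ T | norm t ≤ i + 1}.ncard =
      {t ∈ T | norm t ≤ i}.ncard + {t ∈ T | norm t = i + 1}.ncard := by
  have hsplit : {t ∈ T | norm t ≤ i + 1} = {t ∈ T | norm t ≤ i} ∪ {t ∈ T | norm t = i + 1} := by
    ext t
    simp only [Set.mem_union, Set.mem_ofPred_eq, ← and_or_left]
    exact and_congr_right fun _ => by omega
  rw [hsplit, Set.ncard_union_eq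
    (Set.disjoint_left.mpr fun t h h' => absurd h.2 (by rw [h'.2]; omega))
    ((finite_setOf_norm_le i).subset fun t ht => ht.2)
    ((finite_setOf_norm_le (i + 1)).subset fun t ht => ht.2.le)]

def IsPrefixClosed (T : Set (FreeGroup α)) : Prop :=
  ∀ t ∈ T, ∀ k : ℕ, mk (t.toWord.take k) ∈ T

namespace IsPrefixClosed

variable {T : Set (FreeGroup α)}

theorem mk_mem (hT : IsPrefixClosed T) {t : FreeGroup α} (ht : t ∈ T) {A B : List (α × Bool)}
    (h : t.toWord = A ++ B) : mk A ∈ T := by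
  simpa [h] using hT t ht A.length

theorem one_mem (hT : IsPrefixClosed T) (hne : T.Nonempty) : (1 : FreeGroup α) ∈ T := by
  obtain ⟨t, ht⟩ := hne
  simpa [← one_eq_mk] using hT.mk_mem ht (A := []) rfl

theorem mul_letter_mem_of_norm_lt (hT : IsPrefixClosed T) {t : FreeGroup α} (ht : t ∈ T)
    {y : α × Bool} (h : norm (t * letter y) < norm t) : t * letter y ∈ T := by
  simpa [mk_toWord] using hT.mk_mem ht (norm_mul_letter_lt_iff.mp h)

theorem toWord_mul_letter_of_mem_nonTreeEdges (hT : IsPrefixClosed T)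
    {e : FreeGroup α × (α × Bool)} (he : e ∈ nonTreeEdges T) :
    (e.1 * letter e.2).toWord = e.1.toWord ++ [e.2] :=
  (toWord_mul_letter_or e.1 e.2).resolve_right fun h =>
    he.2 (by simpa [mk_toWord] using hT.mk_mem he.1 h)

/-- An ascending tree edge `t → t * y` is the reverse of the descending edge out of `t * y`. -/
theorem ncard_ascending_eq_ncard_descendingEdges (hT : IsPrefixClosed T) (i : ℕ) :
    {e : FreeGroup α × (α × Bool) | (e.1 ∈ T ∧ norm e.1 ≤ i) ∧ e.1 * letter e.2 ∈ T ∧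
      ¬norm (e.1 * letter e.2) < norm e.1}.ncard =
      (descendingEdges {t ∈ T | norm t ≤ i + 1}).ncard := by
  rw [← Set.ncard_preimage_of_injective_subset_range reverseEdge_involutive.injective
    (by simp [reverseEdge_involutive.surjective.range_eq])]
  congr 1
  ext ⟨t, y⟩
  simp only [descendingEdges, reverseEdge, Set.mem_ofPred_eq, Set.mem_preimage, mul_assoc,
    ← inv_letter, mul_inv_cancel, mul_one]
  constructor
  · rintro ⟨⟨ht, hi⟩, hty, hlt⟩
    refine ⟨⟨hty, ?_⟩, ?_⟩ <;> rcases norm_mul_letter_eq_or t y with h | h <;> omega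
  · rintro ⟨⟨hty, hi⟩, hlt⟩
    refine ⟨⟨hT.mul_letter_mem_of_norm_lt hty hlt, ?_⟩, hty, ?_⟩ <;>
      rcases norm_mul_letter_eq_or t y with h | h <;> omega

/-- Each pair `(t, y)` with `t ∈ T`, `‖t‖ ≤ i` is a descending tree edge (one for each `t ≠ 1`),
an ascending tree edge (one for each `u ≠ 1` in `T` with `‖u‖ ≤ i + 1`) or a non-tree edge. -/
theorem two_mul_card_mul_ncard_add_two [Finite α] (hT : IsPrefixClosed T)
    (h1 : (1 : FreeGroup α) ∈ T) (i : ℕ) :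
    2 * Nat.card α * {t ∈ T | norm t ≤ i}.ncard + 2 =
      {t ∈ T | norm t ≤ i}.ncard + {t ∈ T | norm t ≤ i + 1}.ncard +
        {e ∈ nonTreeEdges T | norm e.1 ≤ i}.ncard := by
  have hfin : ∀ j, {t ∈ T | norm t ≤ j}.Finite := fun j =>
    (finite_setOf_norm_le j).subset fun t ht => ht.2
  have hone : ∀ j, (1 : FreeGroup α) ∈ {t ∈ T | norm t ≤ j} := fun j => ⟨h1, by simp⟩
  set X := {t ∈ T | norm t ≤ i} ×ˢ (Set.univ : Set (α × Bool))
  set P := {e : FreeGroup α × (α × Bool) | e.1 * letter e.2 ∈ T}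
  set Q := {e : FreeGroup α × (α × Bool) | norm (e.1 * letter e.2) < norm e.1}
  have hXfin : X.Finite := (hfin i).prod Set.finite_univ
  have hX : X.ncard = 2 * Nat.card α * {t ∈ T | norm t ≤ i}.ncard := by
    simp [X, Set.ncard_prod, Nat.card_prod, mul_comm]
  have hD : X ∩ P ∩ Q = descendingEdges {t ∈ T | norm t ≤ i} := by
    ext e
    simp only [X, P, Q, descendingEdges, Set.mem_inter_iff, Set.mem_prod, Set.mem_univ,
      and_true, Set.mem_ofPred_eq]
    exact ⟨fun h => ⟨h.1.1, h.2⟩, fun h => ⟨⟨h.1, hT.mul_letter_mem_of_norm_lt h.1.1 h.2⟩, h.2⟩⟩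
  have hU : (X ∩ P) \ Q = {e | (e.1 ∈ T ∧ norm e.1 ≤ i) ∧ e.1 * letter e.2 ∈ T ∧
      ¬norm (e.1 * letter e.2) < norm e.1} := by
    ext e
    simp only [X, P, Q, Set.mem_sdiff, Set.mem_inter_iff, Set.mem_prod, Set.mem_univ, and_true,
      Set.mem_ofPred_eq, and_assoc]
  have hN : X \ P = {e ∈ nonTreeEdges T | norm e.1 ≤ i} := by
    ext e
    simp only [X, P, nonTreeEdges, Set.mem_sdiff, Set.mem_prod, Set.mem_univ, and_true,
      Set.mem_ofPred_eq]
    tauto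
  have hsplit := Set.ncard_inter_add_ncard_sdiff_eq_ncard X P hXfin
  have hsplitP := Set.ncard_inter_add_ncard_sdiff_eq_ncard (X ∩ P) Q (hXfin.inter_of_left P)
  rw [hD, hU, hT.ncard_ascending_eq_ncard_descendingEdges, ncard_descendingEdges,
    ncard_descendingEdges] at hsplitP
  rw [hN, hX] at hsplit
  have := Set.ncard_sdiff_singleton_add_one (hone i) (hfin i)
  have := Set.ncard_sdiff_singleton_add_one (hone (i + 1)) (hfin (i + 1))
  omega

end IsPrefixClosed

end FreeGroup

namespace Subgroup.IsComplement

open FreeGroup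

variable {α : Type*} {H : Subgroup (FreeGroup α)} {R : Set (FreeGroup α)}

/-- The edges of the Schreier graph crossed when reading `w` from the coset `H g`; an edge is
recorded as the representative of its source coset together with its label. -/
noncomputable def schreierPath (hR : IsComplement (H : Set (FreeGroup α)) R) :
    FreeGroup α → List (α × Bool) → List (FreeGroup α × (α × Bool))
  | _, [] => []
  | g, y :: w => ((hR.toRightFun g : FreeGroup α), y) :: schreierPath hR (g * letter y) w

noncomputable def schreierGenerator (hR : IsComplement (H : Set (FreeGroup α)) R)
    (e : FreeGroup α × (α × Bool)) : FreeGroup α :=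
  e.1 * letter e.2 * (hR.toRightFun (e.1 * letter e.2) : FreeGroup α)⁻¹

section

variable (hR : IsComplement (H : Set (FreeGroup α)) R)

theorem schreierPath_append (g : FreeGroup α) (u v : List (α × Bool)) :
    hR.schreierPath g (u ++ v) =
      hR.schreierPath g u ++ hR.schreierPath (g * FreeGroup.mk u) v := by
  induction u generalizing g with
  | nil => simp [schreierPath, ← one_eq_mk]
  | cons y u ih =>
    rw [List.cons_append, schreierPath, schreierPath, ih, List.cons_append, mul_assoc,
      letter_mul_mk]

theorem schreierPath_congr {g₁ g₂ : FreeGroup α} (h : g₁ * g₂⁻¹ ∈ H) (w : List (α × Bool)) :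
    hR.schreierPath g₁ w = hR.schreierPath g₂ w := by
  induction w generalizing g₁ g₂ with
  | nil => rfl
  | cons y w ih =>
    rw [schreierPath, schreierPath, hR.toRightFun_eq_toRightFun h, ih]
    simpa [mul_assoc] using h

theorem schreierPath_subset_of_step {u v : List (α × Bool)} (h : Red.Step u v)
    (g : FreeGroup α) : hR.schreierPath g v ⊆ hR.schreierPath g u := by
  obtain @⟨L₁, L₂, x, b⟩ := h
  rw [schreierPath_append, schreierPath_append, schreierPath, schreierPath,
    mul_assoc (g * _), letter_mul_letter_not (x, b), mul_one]
  intro e he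
  simp only [List.mem_append, List.mem_cons] at he ⊢
  tauto

theorem schreierPath_subset_of_red {u v : List (α × Bool)} (h : Red u v) (g : FreeGroup α) :
    hR.schreierPath g v ⊆ hR.schreierPath g u := by
  induction h with
  | refl => exact List.Subset.refl _
  | tail _ hstep ih => exact List.Subset.trans (hR.schreierPath_subset_of_step hstep g) ih

theorem schreierGenerator_mem (e : FreeGroup α × (α × Bool)) : hR.schreierGenerator e ∈ H :=
  hR.mul_inv_toRightFun_mem _

theorem reverse_mem_nonTreeEdges {e : FreeGroup α × (α × Bool)} (he : e ∈ nonTreeEdges R) :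
    ((hR.toRightFun (e.1 * letter e.2) : FreeGroup α), (e.2.1, !e.2.2)) ∈ nonTreeEdges R := by
  obtain ⟨t, y⟩ := e
  obtain ⟨ht, hty⟩ := he
  set t' := (hR.toRightFun (t * letter y) : FreeGroup α)
  refine ⟨(hR.toRightFun _).2, fun h => hty ?_⟩
  have hcoset : t' * letter (y.1, !y.2) * t⁻¹ ∈ H := by
    simpa [mul_assoc, ← inv_letter] using hR.toRightFun_mul_inv_mem (t * letter y)
  have hback : t' * letter (y.1, !y.2) = t := by
    rw [← hR.toRightFun_of_mem h, hR.toRightFun_eq_of_mul_inv_mem ht hcoset]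
  rw [← hback, mul_assoc, ← inv_letter, inv_mul_cancel, mul_one]
  exact (hR.toRightFun _).2

variable [DecidableEq α]

/-- Free reduction only deletes backtracking, and a product of elements of `H` reads each factor
from the trivial coset. -/
theorem schreierPath_subset_of_mem_closure {S : Set (FreeGroup α)} (hS : S ⊆ H)
    {h : FreeGroup α} (hh : h ∈ closure S) :
    ∀ e ∈ hR.schreierPath 1 h.toWord, ∃ s ∈ S ∪ S⁻¹, e ∈ hR.schreierPath 1 s.toWord := by
  have hSH : S ∪ S⁻¹ ⊆ H := Set.union_subset hS fun s hs => by simpa using H.inv_mem (hS hs)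
  rw [← mem_toSubmonoid, closure_toSubmonoid] at hh
  induction hh using Submonoid.closure_induction with
  | mem x hx => exact fun e he => ⟨x, hx, he⟩
  | one => simp [schreierPath]
  | mul x y hx _ ihx ihy =>
    intro e he
    have hxH : x * 1⁻¹ ∈ H := by simpa using (Submonoid.closure_le.mpr hSH) hx
    replace he := hR.schreierPath_subset_of_red reduce.red 1 (toWord_mul x y ▸ he)
    rw [schreierPath_append, mk_toWord, one_mul, hR.schreierPath_congr hxH] at he
    exact (List.mem_append.mp he).elim (ihx e) (ihy e)

/-- For `e = (t, y)` and `t'` the representative of `t y`, no cancellation occurs: not at `t | y`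
since `t y ∉ R`, and not at `y | t'⁻¹` since the reverse edge `(t', y⁻¹)` is again a non-tree
edge. -/
theorem toWord_schreierGenerator (hT : IsPrefixClosed R) {e : FreeGroup α × (α × Bool)}
    (he : e ∈ nonTreeEdges R) :
    (hR.schreierGenerator e).toWord =
      e.1.toWord ++ e.2 :: (hR.toRightFun (e.1 * letter e.2) : FreeGroup α)⁻¹.toWord := by
  set t' := (hR.toRightFun (e.1 * letter e.2) : FreeGroup α)
  have hleft : IsReduced (e.1.toWord ++ [e.2]) :=
    hT.toWord_mul_letter_of_mem_nonTreeEdges he ▸ isReduced_toWord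
  have hright : IsReduced ([e.2] ++ t'⁻¹.toWord) := by
    have h := hT.toWord_mul_letter_of_mem_nonTreeEdges (hR.reverse_mem_nonTreeEdges he)
    have hinv := toWord_inv (t' * letter (e.2.1, !e.2.2))
    rw [h, invRev_append, ← toWord_inv] at hinv
    have hred := isReduced_toWord (x := (t' * letter (e.2.1, !e.2.2))⁻¹)
    rw [hinv] at hred
    simpa [invRev] using hred
  rw [schreierGenerator, toWord_mul, hT.toWord_mul_letter_of_mem_nonTreeEdges he,
    (hleft.append_overlap hright (List.cons_ne_nil _ _)).reduce_eq, List.append_assoc,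
    List.singleton_append]

theorem mem_schreierPath_schreierGenerator (hT : IsPrefixClosed R)
    {e : FreeGroup α × (α × Bool)} (he : e ∈ nonTreeEdges R) :
    e ∈ hR.schreierPath 1 (hR.schreierGenerator e).toWord := by
  rw [hR.toWord_schreierGenerator hT he, schreierPath_append, mk_toWord, one_mul, schreierPath,
    hR.toRightFun_of_mem he.1]
  exact List.mem_append_right _ List.mem_cons_self

end

theorem fg_of_nonTreeEdges_finite (hR : IsComplement (H : Set (FreeGroup α)) R)
    (h1 : (1 : FreeGroup α) ∈ R) (hfin : (nonTreeEdges R).Finite) : H.FG := by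
  refine (fg_iff H).mpr ⟨_, closure_mul_image_eq hR h1 (closure_range_of α), ?_⟩
  refine ((hfin.image hR.schreierGenerator).insert 1).subset ?_
  rintro _ ⟨_, ⟨t, ht, _, ⟨x, rfl⟩, rfl⟩, rfl⟩
  by_cases hx : t * of x ∈ R
  · left
    simp [hR.toRightFun_of_mem hx]
  · right
    exact ⟨(t, (x, true)), ⟨ht, hx⟩, rfl⟩

theorem nonTreeEdges_finite_of_fg [DecidableEq α] (hR : IsComplement (H : Set (FreeGroup α)) R)
    (hT : IsPrefixClosed R) (hfg : H.FG) : (nonTreeEdges R).Finite := by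
  obtain ⟨S, hS, hSfin⟩ := (fg_iff H).mp hfg
  refine ((hSfin.union hSfin.inv).biUnion fun s _ =>
    (hR.schreierPath 1 s.toWord).finite_toSet).subset fun e he => ?_
  obtain ⟨s, hs, hes⟩ := hR.schreierPath_subset_of_mem_closure (hS ▸ subset_closure)
    (hS ▸ hR.schreierGenerator_mem e) e (hR.mem_schreierPath_schreierGenerator hT he)
  exact Set.mem_biUnion hs hes

theorem fg_iff_nonTreeEdges_finite [DecidableEq α] (hR : IsComplement (H : Set (FreeGroup α)) R)
    (hT : IsPrefixClosed R) : H.FG ↔ (nonTreeEdges R).Finite :=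
  ⟨hR.nonTreeEdges_finite_of_fg hT,
    hR.fg_of_nonTreeEdges_finite (hT.one_mem ⟨_, (hR.toRightFun 1).2⟩)⟩

end Subgroup.IsComplement

namespace IsSchreierTransversal

variable {n : ℕ} {H : Subgroup (FreeGroup (Fin n))} {T : Set (FreeGroup (Fin n))}

theorem isComplement (hT : IsSchreierTransversal H T) :
    Subgroup.IsComplement (H : Set (FreeGroup (Fin n))) T :=
  Subgroup.isComplement_iff_existsUnique_mul_inv_mem.mpr fun g =>
    let ⟨t, ⟨ht, hg⟩, huniq⟩ := hT.1 g
    ⟨⟨t, ht⟩, hg, fun s hs => Subtype.ext (huniq s ⟨s.2, hs⟩)⟩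

theorem isPrefixClosed (hT : IsSchreierTransversal H T) : IsPrefixClosed T := hT.2

theorem rT_eq (hT : IsSchreierTransversal H T) (i : ℕ) :
    rT n T i = ({e ∈ nonTreeEdges T | norm e.1 ≤ i}.ncard : ℚ) / 2 := by
  have h1 := hT.isPrefixClosed.one_mem ⟨_, (hT.isComplement.toRightFun 1).2⟩
  have hcount := hT.isPrefixClosed.two_mul_card_mul_ncard_add_two h1 i
  have hsucc := ncard_sep_norm_le_succ T i
  rw [Nat.card_eq_fintype_card, Fintype.card_fin] at hcount
  rw [← Nat.cast_inj (R := ℚ)] at hcount hsucc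
  push_cast at hcount hsucc
  rw [rT, GammaT, gammaT]
  linarith

end IsSchreierTransversal

theorem rT_eventually_constant_iff_fg_general {n : ℕ}
    (H : Subgroup (FreeGroup (Fin n))) (T : Set (FreeGroup (Fin n)))
    (hT : IsSchreierTransversal H T) :
    (∃ N : ℕ, ∀ i : ℕ, N ≤ i → rT n T i = rT n T N) ↔ H.FG := by
  have hfin : ∀ i, {e ∈ nonTreeEdges T | norm e.1 ≤ i}.Finite := fun i =>
    ((finite_setOf_norm_le i).prod Set.finite_univ).subset fun e he => ⟨he.2, trivial⟩
  simp only [hT.rT_eq, div_left_inj' (two_ne_zero' ℚ), Nat.cast_inj]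
  rw [hT.isComplement.fg_iff_nonTreeEdges_finite hT.isPrefixClosed,
    Set.finite_iff_exists_ncard_sep_le_const hfin]

/-- The sequence `r_T(i)` is eventually constant if and only if `H` is finitely
generated. -/
theorem rT_eventually_constant_iff_fg {n : ℕ} (hn : 1 ≤ n)
    (H : Subgroup (FreeGroup (Fin n))) (T : Set (FreeGroup (Fin n)))
    (hT : IsSchreierTransversal H T) :
    (∃ N : ℕ, ∀ i : ℕ, N ≤ i → rT n T i = rT n T N) ↔ H.FG :=
  rT_eventually_constant_iff_fg_general H T hT
end

section
/- Let F be the free group on a set X with |X| = 2. There exists a subgroup H of F such that H has exponential cogrowth (there exist a real number b > 1 and i₀ such that Γ_{F/H}(i) ≥ b^i for all i ≥ i₀), while H admits a Schreier transversal T with Γ_T(i) = i + 1 for all i ≥ 0. -/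
open FreeGroup

/-- The minimal length of a representative of the right coset `C` of `H`. -/
noncomputable def cosetMinLen {n : ℕ} (H : Subgroup (FreeGroup (Fin n)))
    (C : Quotient (QuotientGroup.rightRel H)) : ℕ :=
  sInf (FreeGroup.norm '' {g | Quotient.mk (QuotientGroup.rightRel H) g = C})

/-- The cogrowth function `Γ_{F/H}(i)`: the number of right cosets of `H`
whose shortest representative has length at most `i`. -/
noncomputable def cogrowth {n : ℕ} (H : Subgroup (FreeGroup (Fin n))) (i : ℕ) : ℕ :=
  Nat.card {C : Quotient (QuotientGroup.rightRel H) // cosetMinLen H C ≤ i}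

/-!
Let `a` act on `ℤ` by translation and `b` by the permutation `twist`, which negates the positive
odd and the negative even integers and sends a positive even `x` to `2 * x - 1`, and let `H` be the
stabiliser of `0`; the right coset `H g` is then determined by the point `pos g = g⁻¹ • 0`.
The reduced word `a b a⁻¹ b a b a⁻¹ b ⋯` visits `0, 1, -1, -2, 2, 3, -3, …`, every integer exactly
once, so its prefixes form a Schreier transversal with one element of each length.
On the other hand `b a` and `b a⁻¹` lead from a positive even point `2 y` to `4 y` and `4 y - 2`,
so `a a` followed by `j` such pairs reaches `2 ^ j` different points: there are at least `2 ^ j`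
cosets within distance `2 j + 2`.
-/

open Function

section Cogrowth

variable {n : ℕ}

theorem FreeGroup.finite_setOf_norm_le_s14 {α : Type*} [Finite α] [DecidableEq α] (i : ℕ) :
    {g : FreeGroup α | g.norm ≤ i}.Finite :=
  ((List.finite_length_le _ i).image FreeGroup.mk).subset
    fun g hg => ⟨g.toWord, hg, FreeGroup.mk_toWord⟩

theorem setOf_cosetMinLen_le (H : Subgroup (FreeGroup (Fin n))) (i : ℕ) :
    {C | cosetMinLen H C ≤ i} =
      Quotient.mk (QuotientGroup.rightRel H) '' {g | g.norm ≤ i} := by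
  ext C
  refine ⟨fun hC => ?_, ?_⟩
  · obtain ⟨a, rfl⟩ := Quotient.exists_rep C
    obtain ⟨g, hg, hlen⟩ := Nat.sInf_mem (⟨a.norm, a, rfl, rfl⟩ :
      (FreeGroup.norm '' {g | Quotient.mk (QuotientGroup.rightRel H) g = ⟦a⟧}).Nonempty)
    exact ⟨g, hlen.trans_le hC, hg⟩
  · rintro ⟨g, hg, rfl⟩
    exact (Nat.sInf_le ⟨g, rfl, rfl⟩ : cosetMinLen H ⟦g⟧ ≤ g.norm).trans hg

theorem ncard_image_ball_le_cogrowth (H : Subgroup (FreeGroup (Fin n))) {β : Type*}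
    (ρ : FreeGroup (Fin n) → β) (hρ : ∀ g t, g * t⁻¹ ∈ H → ρ g = ρ t) (i : ℕ) :
    (ρ '' {g | g.norm ≤ i}).ncard ≤ cogrowth H i := by
  let ρQ : Quotient (QuotientGroup.rightRel H) → β :=
    Quotient.lift ρ fun a b hab => (hρ b a (QuotientGroup.rightRel_apply.mp hab)).symm
  rw [cogrowth, ← Set.coe_ofPred, Nat.card_coe_set_eq, setOf_cosetMinLen_le,
    show ρ = ρQ ∘ Quotient.mk _ from rfl, Set.image_comp]
  exact Set.ncard_image_le ((FreeGroup.finite_setOf_norm_le_s14 i).image _)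

end Cogrowth

section Ray

variable {n : ℕ}

def rayWord (ℓ : ℕ → Fin n × Bool) (k : ℕ) : FreeGroup (Fin n) :=
  FreeGroup.mk ((List.range k).map ℓ)

variable {ℓ : ℕ → Fin n × Bool}

theorem rayWord_succ (k : ℕ) : rayWord ℓ (k + 1) = rayWord ℓ k * FreeGroup.mk [ℓ k] := by
  rw [rayWord, rayWord, FreeGroup.mul_mk, List.range_succ, List.map_append, List.map_singleton]

theorem toWord_rayWord (hℓ : ∀ k, FreeGroup.IsReduced [ℓ k, ℓ (k + 1)]) (k : ℕ) :
    (rayWord ℓ k).toWord = (List.range k).map ℓ := by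
  rw [rayWord, FreeGroup.toWord_mk, FreeGroup.IsReduced.reduce_eq]
  rw [FreeGroup.IsReduced, List.isChain_map, List.isChain_range]
  exact fun m _ => by simpa using hℓ m

theorem norm_rayWord (hℓ : ∀ k, FreeGroup.IsReduced [ℓ k, ℓ (k + 1)]) (k : ℕ) :
    (rayWord ℓ k).norm = k := by
  rw [FreeGroup.norm, toWord_rayWord hℓ, List.length_map, List.length_range]

theorem isSchreierTransversal_range_rayWord (hℓ : ∀ k, FreeGroup.IsReduced [ℓ k, ℓ (k + 1)])
    {H : Subgroup (FreeGroup (Fin n))} (hH : ∀ g, ∃! k, g * (rayWord ℓ k)⁻¹ ∈ H) :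
    IsSchreierTransversal H (Set.range (rayWord ℓ)) := by
  refine ⟨fun g => ?_, ?_⟩
  · obtain ⟨k, hk, huniq⟩ := hH g
    refine ⟨rayWord ℓ k, ⟨⟨k, rfl⟩, hk⟩, ?_⟩
    rintro _ ⟨⟨k', rfl⟩, hk'⟩
    rw [huniq k' hk']
  · rintro _ ⟨k, rfl⟩ m
    rw [toWord_rayWord hℓ, ← List.map_take, List.take_range]
    exact ⟨min m k, rfl⟩

theorem gammaT_range_rayWord (hℓ : ∀ k, FreeGroup.IsReduced [ℓ k, ℓ (k + 1)]) (i : ℕ) :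
    GammaT (Set.range (rayWord ℓ)) i = i + 1 := by
  have hinj : Injective (rayWord ℓ) := fun k k' h => by
    rw [← norm_rayWord hℓ k, h, norm_rayWord hℓ]
  have hball : {t ∈ Set.range (rayWord ℓ) | t.norm ≤ i} = rayWord ℓ '' Set.Iic i := by
    ext t
    constructor
    · rintro ⟨⟨k, rfl⟩, hk⟩
      exact ⟨k, (norm_rayWord hℓ k).symm.trans_le hk, rfl⟩
    · rintro ⟨k, hk, rfl⟩
      exact ⟨⟨k, rfl⟩, (norm_rayWord hℓ k).trans_le hk⟩
  rw [GammaT, hball, Set.ncard_image_of_injective _ hinj, ← Finset.coe_Iic,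
    Set.ncard_coe_finset, Nat.card_Iic]

end Ray

theorem mul_inv_mem_comap_stabilizer_iff {G M α : Type*} [Group G] [Group M] [MulAction M α]
    (φ : G →* M) (x : α) {g t : G} :
    g * t⁻¹ ∈ (MulAction.stabilizer M x).comap φ ↔ (φ g)⁻¹ • x = (φ t)⁻¹ • x := by
  rw [Subgroup.mem_comap, MulAction.mem_stabilizer_iff, _root_.map_mul, _root_.map_inv, mul_smul,
    smul_eq_iff_eq_inv_smul, eq_comm]

namespace CogrowthExample

def twist : Equiv.Perm ℤ where
  toFun x :=
    if 0 < x ∧ x % 2 = 0 then 2 * x - 1 else if x < 0 ∧ x % 4 = 1 then (x - 1) / 2 else -x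
  invFun y :=
    if 0 < y ∧ y % 4 = 3 then (y + 1) / 2 else if y < 0 ∧ y % 2 = 0 then 2 * y + 1 else -y
  left_inv x := by dsimp only; split_ifs <;> omega
  right_inv y := by dsimp only; split_ifs <;> omega

/-- The generators act through their inverses, so that along a word read from left to right
`pos` moves by `a : x ↦ x + 1` and `b : x ↦ twist x`. -/
noncomputable def phi : FreeGroup (Fin 2) →* Equiv.Perm ℤ :=
  FreeGroup.lift ![(Equiv.addRight 1)⁻¹, twist⁻¹]

noncomputable def pos (g : FreeGroup (Fin 2)) : ℤ := (phi g)⁻¹ 0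

noncomputable def H : Subgroup (FreeGroup (Fin 2)) :=
  (MulAction.stabilizer (Equiv.Perm ℤ) (0 : ℤ)).comap phi

theorem mul_inv_mem_H_iff {g t : FreeGroup (Fin 2)} : g * t⁻¹ ∈ H ↔ pos g = pos t :=
  mul_inv_mem_comap_stabilizer_iff phi (0 : ℤ)

theorem pos_one : pos 1 = 0 := rfl

theorem pos_mul_of_zero (g : FreeGroup (Fin 2)) : pos (g * .of 0) = pos g + 1 := by
  simp [pos, phi, Equiv.Perm.mul_apply]

theorem pos_mul_inv_of_zero (g : FreeGroup (Fin 2)) : pos (g * (.of 0)⁻¹) = pos g - 1 := by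
  simp [pos, phi, Equiv.Perm.mul_apply, sub_eq_add_neg]

theorem pos_mul_of_one (g : FreeGroup (Fin 2)) : pos (g * .of 1) = twist (pos g) := by
  simp [pos, phi, Equiv.Perm.mul_apply]

/-- The letters of the word `a b a⁻¹ b a b a⁻¹ b ⋯`. -/
def zigzag (k : ℕ) : Fin 2 × Bool := if k % 2 = 1 then (1, true) else (0, decide (k % 4 = 0))

/-- The integers in the order `0, 1, -1, -2, 2, 3, -3, -4, 4, …` visited by `zigzag`. -/
def zigzagPos (k : ℕ) : ℤ := if k % 4 < 2 then ((k + 1) / 2 : ℕ) else -((k + 1) / 2 : ℕ)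

theorem zigzagPos_bijective : Bijective zigzagPos := by
  refine ⟨fun k k' h => by unfold zigzagPos at h; split_ifs at h <;> omega, fun m => ?_⟩
  rcases Int.emod_two_eq_zero_or_one m with hm | hm <;> rcases le_or_gt 0 m with hs | hs
  · exact ⟨(2 * m).toNat, by unfold zigzagPos; split_ifs <;> omega⟩
  · exact ⟨(-2 * m - 1).toNat, by unfold zigzagPos; split_ifs <;> omega⟩
  · exact ⟨(2 * m - 1).toNat, by unfold zigzagPos; split_ifs <;> omega⟩
  · exact ⟨(-2 * m).toNat, by unfold zigzagPos; split_ifs <;> omega⟩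

theorem isReduced_zigzag (k : ℕ) : FreeGroup.IsReduced [zigzag k, zigzag (k + 1)] := by
  have : (zigzag k).1 ≠ (zigzag (k + 1)).1 := by unfold zigzag; split_ifs <;> simp <;> omega
  simp [this]

theorem pos_rayWord_zigzag (k : ℕ) : pos (rayWord zigzag k) = zigzagPos k := by
  induction k with
  | zero => rfl
  | succ k ih =>
    rw [rayWord_succ]
    rcases (by omega : k % 4 = 0 ∨ k % 4 = 2 ∨ k % 2 = 1) with h | h | h
    · have hk : FreeGroup.mk [zigzag k] = .of 0 := by
        rw [show zigzag k = (0, true) by simp [zigzag, h, show k % 2 ≠ 1 by omega]]; rfl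
      rw [hk, pos_mul_of_zero, ih]
      unfold zigzagPos; split_ifs <;> omega
    · have hk : FreeGroup.mk [zigzag k] = (.of 0)⁻¹ := by
        rw [show zigzag k = (0, false) by simp [zigzag, h, show k % 2 ≠ 1 by omega]]; rfl
      rw [hk, pos_mul_inv_of_zero, ih]
      unfold zigzagPos; split_ifs <;> omega
    · have hk : FreeGroup.mk [zigzag k] = .of 1 := by simp [zigzag, h]; rfl
      rw [hk, pos_mul_of_one, ih]
      unfold zigzagPos twist; simp only [Equiv.coe_fn_mk]; split_ifs <;> omega

theorem isSchreierTransversal_range_rayWord_zigzag :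
    IsSchreierTransversal H (Set.range (rayWord zigzag)) := by
  refine isSchreierTransversal_range_rayWord isReduced_zigzag fun g => ?_
  simp_rw [mul_inv_mem_H_iff, pos_rayWord_zigzag, eq_comm (a := pos g)]
  exact zigzagPos_bijective.existsUnique (pos g)

theorem exists_norm_le_pos_eq_two_mul (j : ℕ) {y : ℤ} (hy : 1 ≤ y) (hyj : y ≤ 2 ^ j) :
    ∃ g : FreeGroup (Fin 2), g.norm ≤ 2 * j + 2 ∧ pos g = 2 * y := by
  induction j generalizing y with
  | zero =>
    obtain rfl : y = 1 := by rw [pow_zero] at hyj; omega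
    refine ⟨1 * .of 0 * .of 0, ?_, by rw [pos_mul_of_zero, pos_mul_of_zero, pos_one]; rfl⟩
    simpa [FreeGroup.norm_of] using FreeGroup.norm_mul_le (.of (0 : Fin 2)) (.of 0)
  | succ j ih =>
    obtain ⟨g, hg, hpos⟩ := ih (y := (y + 1) / 2) (by omega) (by rw [pow_succ] at hyj; omega)
    have htwist : twist (pos g) = 2 * (2 * ((y + 1) / 2)) - 1 := by
      rw [hpos]
      exact if_pos ⟨by omega, by omega⟩
    have hnorm (x : FreeGroup (Fin 2)) (hx : x.norm = 1) :
        (g * .of 1 * x).norm ≤ 2 * (j + 1) + 2 := by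
      have := FreeGroup.norm_mul_le (g * .of 1) x
      have := FreeGroup.norm_mul_le g (.of 1)
      rw [FreeGroup.norm_of] at this
      omega
    rcases Int.emod_two_eq_zero_or_one y with h | h
    · refine ⟨g * .of 1 * .of 0, hnorm _ (FreeGroup.norm_of 0), ?_⟩
      rw [pos_mul_of_zero, pos_mul_of_one, htwist]
      omega
    · refine ⟨g * .of 1 * (.of 0)⁻¹, hnorm _ (by rw [FreeGroup.norm_inv_eq, FreeGroup.norm_of]), ?_⟩
      rw [pos_mul_inv_of_zero, pos_mul_of_one, htwist]
      omega

theorem two_pow_le_cogrowth {i j : ℕ} (hij : 2 * j + 2 ≤ i) : 2 ^ j ≤ cogrowth H i :=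
  calc 2 ^ j = ((2 * ·) '' Set.Icc (1 : ℤ) (2 ^ j)).ncard := by
        rw [Set.ncard_image_of_injective _ (mul_right_injective₀ two_ne_zero), ← Finset.coe_Icc,
          Set.ncard_coe_finset, Int.card_Icc, add_sub_cancel_right]
        norm_cast
    _ ≤ (pos '' {g | g.norm ≤ i}).ncard := by
        refine Set.ncard_le_ncard ?_ ((FreeGroup.finite_setOf_norm_le_s14 i).image _)
        rintro _ ⟨y, ⟨hy, hyj⟩, rfl⟩
        obtain ⟨g, hg, hpos⟩ := exists_norm_le_pos_eq_two_mul j hy hyj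
        exact ⟨g, hg.trans hij, hpos⟩
    _ ≤ cogrowth H i := ncard_image_ball_le_cogrowth H pos (fun _ _ => mul_inv_mem_H_iff.mp) i

end CogrowthExample

theorem exists_one_lt_pow_le_of_two_pow_le {f : ℕ → ℕ}
    (hf : ∀ i j, 2 * j + 2 ≤ i → 2 ^ j ≤ f i) :
    ∃ b : ℝ, 1 < b ∧ ∃ i₀ : ℕ, ∀ i, i₀ ≤ i → b ^ i ≤ f i := by
  set b := √(√2)
  have hb : 1 < b := Real.lt_sqrt_of_sq_lt (by simpa using Real.one_lt_sqrt_two)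
  have hb4 : b ^ 4 = 2 := by
    rw [show b ^ 4 = (b ^ 2) ^ 2 by ring, Real.sq_sqrt (by positivity), Real.sq_sqrt (by norm_num)]
  refine ⟨b, hb, 6, fun i hi => ?_⟩
  calc b ^ i ≤ b ^ (4 * ((i - 2) / 2)) := pow_le_pow_right₀ hb.le (by omega)
    _ = 2 ^ ((i - 2) / 2) := by rw [pow_mul, hb4]
    _ ≤ f i := by exact_mod_cast hf i _ (by omega)

/-- There is a subgroup of the free group of rank 2 with exponential cogrowth
which admits a Schreier transversal of linear growth `Γ_T(i) = i + 1`. -/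
theorem exists_subgroup_linear_transversal_exponential_cogrowth :
    ∃ (H : Subgroup (FreeGroup (Fin 2))) (T : Set (FreeGroup (Fin 2))),
      IsSchreierTransversal H T ∧
      (∀ i : ℕ, GammaT T i = i + 1) ∧
      ∃ b : ℝ, 1 < b ∧ ∃ i₀ : ℕ, ∀ i : ℕ, i₀ ≤ i → b ^ i ≤ (cogrowth H i : ℝ) :=
  ⟨CogrowthExample.H, Set.range (rayWord CogrowthExample.zigzag),
    CogrowthExample.isSchreierTransversal_range_rayWord_zigzag,
    gammaT_range_rayWord CogrowthExample.isReduced_zigzag,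
    exists_one_lt_pow_le_of_two_pow_le fun _ _ => CogrowthExample.two_pow_le_cogrowth⟩
end

section
/- Let H be a subgroup of F, let T be a Schreier transversal for H with coset map φ, and let B_T = { t·x·φ(t·x)⁻¹ : t ∈ T, x ∈ X } \ {1} be the associated Schreier basis of H. For w ∈ F put d(w, T) = min{ l(t⁻¹·w) : t ∈ T }. Then every w ∈ F can be written as w = b₁^{ε₁} ⋯ b_k^{ε_k} · φ(w) with k ≤ d(w, T) ≤ l(w), b_j ∈ B_T and ε_j ∈ {+1, −1}. In particular, every element of H of length i is a product of at most i elements of B_T ∪ B_T⁻¹. -/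
/-!
Choose `t ∈ T` with `l(t⁻¹·w) = d(w, T)` and read the reduced word `a₁ ⋯ a_m` of `t⁻¹·w`
letter by letter: with `t₀ = t` and `tᵢ = φ(tᵢ₋₁·aᵢ)`, the product telescopes to
`w = ∏ᵢ (tᵢ₋₁·aᵢ·tᵢ⁻¹) · t_m`, where `t_m = φ(w)` and every factor is either trivial or a
Schreier generator to the power `±1`.
-/

open FreeGroup

/-- The Schreier basis of `H` associated with the transversal `T` and coset map
`φ`: the nontrivial elements `t·x·φ(t·x)⁻¹` for `t ∈ T`, `x ∈ X`. -/
def SchreierBasis {n : ℕ} (T : Set (FreeGroup (Fin n)))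
    (φ : FreeGroup (Fin n) → FreeGroup (Fin n)) : Set (FreeGroup (Fin n)) :=
  {g | g ≠ 1 ∧ ∃ t ∈ T, ∃ x : Fin n,
    g = t * FreeGroup.of x * (φ (t * FreeGroup.of x))⁻¹}

/-- `d(w, T) = min { l(t⁻¹·w) : t ∈ T }`, the distance of `w` from `T`. -/
noncomputable def distT {n : ℕ} (T : Set (FreeGroup (Fin n)))
    (w : FreeGroup (Fin n)) : ℕ :=
  sInf {m : ℕ | ∃ t ∈ T, FreeGroup.norm (t⁻¹ * w) = m}

section CosetMap

variable {G : Type*} [Group G] {H : Subgroup G} {T : Set G} {φ : G → G}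

theorem coset_map_eq_of_mul_inv_mem (hT : ∀ g : G, ∃! t, t ∈ T ∧ g * t⁻¹ ∈ H)
    (hφ : ∀ g : G, φ g ∈ T ∧ g * (φ g)⁻¹ ∈ H) {g t : G} (ht : t ∈ T) (hg : g * t⁻¹ ∈ H) :
    φ g = t :=
  (hT g).unique (hφ g) ⟨ht, hg⟩

theorem coset_map_eq_self (hT : ∀ g : G, ∃! t, t ∈ T ∧ g * t⁻¹ ∈ H)
    (hφ : ∀ g : G, φ g ∈ T ∧ g * (φ g)⁻¹ ∈ H) {t : G} (ht : t ∈ T) : φ t = t :=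
  coset_map_eq_of_mul_inv_mem hT hφ ht (by simp [H.one_mem])

theorem coset_map_congr (hT : ∀ g : G, ∃! t, t ∈ T ∧ g * t⁻¹ ∈ H)
    (hφ : ∀ g : G, φ g ∈ T ∧ g * (φ g)⁻¹ ∈ H) {g g' : G} (h : g * g'⁻¹ ∈ H) :
    φ g = φ g' :=
  coset_map_eq_of_mul_inv_mem hT hφ (hφ g').1 <| by
    simpa [mul_assoc] using H.mul_mem h (hφ g').2

end CosetMap

theorem exists_ofFn_zpow_eq_prod {G : Type*} [Group G] {S : Set G} (l : List G)
    (hl : ∀ c ∈ l, c ∈ S ∪ S⁻¹) :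
    ∃ (b : Fin l.length → G) (ε : Fin l.length → ℤ), (∀ j, b j ∈ S) ∧
      (∀ j, ε j = 1 ∨ ε j = -1) ∧ l.prod = (List.ofFn fun j => b j ^ ε j).prod := by
  have hletter : ∀ j : Fin l.length, ∃ b ∈ S, ∃ ε : ℤ, (ε = 1 ∨ ε = -1) ∧ b ^ ε = l[j] := by
    intro j
    rcases hl _ (List.getElem_mem j.2) with h | h
    · exact ⟨_, h, 1, Or.inl rfl, zpow_one _⟩
    · exact ⟨_, h, -1, Or.inr rfl, by simp⟩
  choose b hb ε hε hbε using hletter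
  refine ⟨b, ε, hb, hε, ?_⟩
  simp only [hbε]
  exact congrArg List.prod List.ofFn_getElem.symm

section Schreier

variable {n : ℕ} {H : Subgroup (FreeGroup (Fin n))} {T : Set (FreeGroup (Fin n))}
  {φ : FreeGroup (Fin n) → FreeGroup (Fin n)}

theorem IsSchreierTransversal.one_mem_s17 (hT : IsSchreierTransversal H T) : 1 ∈ T := by
  obtain ⟨t, ⟨ht, -⟩, -⟩ := hT.1 1
  simpa [← one_eq_mk] using hT.2 t ht 0

theorem distT_le_norm (h1 : (1 : FreeGroup (Fin n)) ∈ T) (w : FreeGroup (Fin n)) :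
    distT T w ≤ norm w :=
  Nat.sInf_le ⟨1, h1, by simp⟩

theorem exists_norm_inv_mul_eq_distT (h1 : (1 : FreeGroup (Fin n)) ∈ T)
    (w : FreeGroup (Fin n)) : ∃ t ∈ T, norm (t⁻¹ * w) = distT T w := by
  have hne : {m | ∃ t ∈ T, norm (t⁻¹ * w) = m}.Nonempty := ⟨_, 1, h1, rfl⟩
  exact Nat.sInf_mem hne

/-- For `a = x⁻¹` the element is the inverse of `t'·x·φ(t'·x)⁻¹` with `t' = φ(t·x⁻¹)`,
since `φ(t'·x) = t`. -/
theorem mul_mul_inv_coset_map_mem (hT : ∀ g, ∃! t, t ∈ T ∧ g * t⁻¹ ∈ H)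
    (hφ : ∀ g, φ g ∈ T ∧ g * (φ g)⁻¹ ∈ H) {t a : FreeGroup (Fin n)} (ht : t ∈ T) {x : Fin n}
    (ha : a = of x ∨ a = (of x)⁻¹) (hne : t * a * (φ (t * a))⁻¹ ≠ 1) :
    t * a * (φ (t * a))⁻¹ ∈ SchreierBasis T φ ∪ (SchreierBasis T φ)⁻¹ := by
  rcases ha with rfl | rfl
  · exact Or.inl ⟨hne, t, ht, x, rfl⟩
  · set t' := φ (t * (of x)⁻¹)
    have hinv : (t * (of x)⁻¹ * t'⁻¹)⁻¹ = t' * of x * t⁻¹ := by group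
    have hφt' : φ (t' * of x) = t :=
      coset_map_eq_of_mul_inv_mem hT hφ ht (hinv ▸ H.inv_mem (hφ _).2)
    refine Or.inr (Set.mem_inv.mpr (show _ ∈ SchreierBasis T φ from
      ⟨inv_ne_one.mpr hne, t', (hφ _).1, x, ?_⟩))
    rw [hinv, hφt']

theorem exists_list_prod_mul_coset_map (hT : ∀ g, ∃! t, t ∈ T ∧ g * t⁻¹ ∈ H)
    (hφ : ∀ g, φ g ∈ T ∧ g * (φ g)⁻¹ ∈ H) (L : List (Fin n × Bool)) {t : FreeGroup (Fin n)}
    (ht : t ∈ T) :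
    ∃ l : List (FreeGroup (Fin n)), l.length ≤ L.length ∧
      (∀ c ∈ l, c ∈ SchreierBasis T φ ∪ (SchreierBasis T φ)⁻¹) ∧
      t * mk L = l.prod * φ (t * mk L) := by
  induction L generalizing t with
  | nil => exact ⟨[], le_rfl, by simp, by simp [← one_eq_mk, coset_map_eq_self hT hφ ht]⟩
  | cons letter L ih =>
    obtain ⟨x, s⟩ := letter
    set a : FreeGroup (Fin n) := mk [(x, s)]
    have ha : a = of x ∨ a = (of x)⁻¹ := by cases s <;> simp [a, of, inv_mk, invRev]
    set g := t * a * (φ (t * a))⁻¹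
    obtain ⟨l, hlen, hl, hprod⟩ := ih (hφ (t * a)).1
    have hsplit : t * mk ((x, s) :: L) = g * (φ (t * a) * mk L) := by
      rw [← List.singleton_append, ← mul_mk]
      simp only [g, a]
      group
    have hcoset : φ (t * mk ((x, s) :: L)) = φ (φ (t * a) * mk L) :=
      coset_map_congr hT hφ (by rw [hsplit, mul_inv_cancel_right]; exact (hφ (t * a)).2)
    have hw : t * mk ((x, s) :: L) = g * l.prod * φ (φ (t * a) * mk L) :=
      hsplit.trans ((congrArg (g * ·) hprod).trans (mul_assoc _ _ _).symm)
    rw [hcoset]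
    by_cases hg : g = 1
    · exact ⟨l, hlen.trans L.length.le_succ, hl, by rwa [hg, one_mul] at hw⟩
    · exact ⟨g :: l, Nat.succ_le_succ hlen,
        List.forall_mem_cons.mpr ⟨mul_mul_inv_coset_map_mem hT hφ ht ha hg, hl⟩,
        by rwa [List.prod_cons]⟩

end Schreier

theorem schreier_normal_form_general {n : ℕ}
    (H : Subgroup (FreeGroup (Fin n))) (T : Set (FreeGroup (Fin n)))
    (hT : IsSchreierTransversal H T)
    (φ : FreeGroup (Fin n) → FreeGroup (Fin n))
    (hφ : ∀ g : FreeGroup (Fin n), φ g ∈ T ∧ g * (φ g)⁻¹ ∈ H)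
    (w : FreeGroup (Fin n)) :
    distT T w ≤ FreeGroup.norm w ∧
    (∃ k : ℕ, k ≤ distT T w ∧
      ∃ (b : Fin k → FreeGroup (Fin n)) (ε : Fin k → ℤ),
        (∀ j, b j ∈ SchreierBasis T φ) ∧ (∀ j, ε j = 1 ∨ ε j = -1) ∧
        w = (List.ofFn (fun j => b j ^ ε j)).prod * φ w) ∧
    (w ∈ H → ∃ k : ℕ, k ≤ FreeGroup.norm w ∧
      ∃ c : Fin k → FreeGroup (Fin n),
        (∀ j, c j ∈ SchreierBasis T φ ∪ (fun g => g⁻¹) '' SchreierBasis T φ) ∧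
        w = (List.ofFn c).prod) := by
  have h1 := hT.one_mem_s17
  obtain ⟨t, ht, htw⟩ := exists_norm_inv_mul_eq_distT h1 w
  obtain ⟨l, hlen, hl, hw⟩ := exists_list_prod_mul_coset_map hT.1 hφ (t⁻¹ * w).toWord ht
  rw [mk_toWord, mul_inv_cancel_left] at hw
  have hlen' : l.length ≤ distT T w := hlen.trans_eq htw
  obtain ⟨b, ε, hb, hε, hprod⟩ := exists_ofFn_zpow_eq_prod l hl
  refine ⟨distT_le_norm h1 w, ⟨l.length, hlen', b, ε, hb, hε, hprod ▸ hw⟩, fun hwH => ?_⟩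
  rw [coset_map_eq_of_mul_inv_mem hT.1 hφ h1 (by simpa using hwH), mul_one] at hw
  refine ⟨l.length, hlen'.trans (distT_le_norm h1 w), fun j => l[j], fun j => ?_, ?_⟩
  · rw [Set.image_inv_eq_inv]
    exact hl _ (List.getElem_mem _)
  · exact hw.trans (congrArg List.prod List.ofFn_getElem.symm)

/-- Every `w ∈ F` can be written as `b₁^{ε₁} ⋯ b_k^{ε_k} · φ(w)` with
`k ≤ d(w,T) ≤ l(w)`, `b_j` in the Schreier basis and `ε_j = ±1`; in particular
every element of `H` of length `i` is a product of at most `i` elements of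
`B_T ∪ B_T⁻¹`. -/
theorem schreier_normal_form {n : ℕ} (hn : 1 ≤ n)
    (H : Subgroup (FreeGroup (Fin n))) (T : Set (FreeGroup (Fin n)))
    (hT : IsSchreierTransversal H T)
    (φ : FreeGroup (Fin n) → FreeGroup (Fin n))
    (hφ : ∀ g : FreeGroup (Fin n), φ g ∈ T ∧ g * (φ g)⁻¹ ∈ H)
    (w : FreeGroup (Fin n)) :
    distT T w ≤ FreeGroup.norm w ∧
    (∃ k : ℕ, k ≤ distT T w ∧
      ∃ (b : Fin k → FreeGroup (Fin n)) (ε : Fin k → ℤ),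
        (∀ j, b j ∈ SchreierBasis T φ) ∧ (∀ j, ε j = 1 ∨ ε j = -1) ∧
        w = (List.ofFn (fun j => b j ^ ε j)).prod * φ w) ∧
    (w ∈ H → ∃ k : ℕ, k ≤ FreeGroup.norm w ∧
      ∃ c : Fin k → FreeGroup (Fin n),
        (∀ j, c j ∈ SchreierBasis T φ ∪ (fun g => g⁻¹) '' SchreierBasis T φ) ∧
        w = (List.ofFn c).prod) :=
  schreier_normal_form_general H T hT φ hφ w
end

section
/- Let A be a subgroup of F and let T ⊆ F contain exactly one representative of each right coset of A, with 1 ∈ T. If the membership predicate of A and the membership predicate of T are both recursively enumerable, then the membership predicate of A is decidable. -/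
/-!
An element `g` lies outside `A` exactly when its coset representative is not `1`, i.e. when some
`t ∈ T` with `t ≠ 1` satisfies `g * t⁻¹ ∈ A`. Since the word problem of the free group is decidable,
this is an existential statement over an r.e. relation, so the complement of `A` is r.e. as well,
and Post's theorem makes `A` decidable.
-/

open FreeGroup

section REPred

variable {α β : Type*} [Primcodable α] [Primcodable β]

theorem REPred.comp {p : β → Prop} {f : α → β} (hp : REPred p) (hf : Computable f) :
    REPred fun a => p (f a) :=
  Partrec.comp hp hf

theorem REPred.exists_computable₂_bool {p : α → Prop} (hp : REPred p) :
    ∃ f : α → ℕ → Bool, Computable₂ f ∧ ∀ a, p a ↔ ∃ k, f a k = true := by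
  obtain ⟨c, hc⟩ := Nat.Partrec.Code.exists_code.1 hp
  refine ⟨fun a k => (Nat.Partrec.Code.evaln k c (Encodable.encode a)).isSome, ?_, fun a => ?_⟩
  · exact (Primrec.option_isSome.comp <| Nat.Partrec.Code.primrec_evaln.comp <|
      Primrec.pair (Primrec.pair Primrec.snd (Primrec.const c))
        (Primrec.encode.comp Primrec.fst)).to_comp.to₂
  · have hp_dom : p a ↔ (Nat.Partrec.Code.eval c (Encodable.encode a)).Dom := by
      simp [hc, Encodable.encodek, Part.assert]
    simp only [hp_dom, Part.dom_iff_mem, Nat.Partrec.Code.evaln_complete, Option.isSome_iff_exists]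
    exact ⟨fun ⟨x, k, h⟩ => ⟨k, x, h⟩, fun ⟨k, x, h⟩ => ⟨x, k, h⟩⟩

theorem REPred.exists_of_computable₂ {f : α → ℕ → Bool} (hf : Computable₂ f) :
    REPred fun a => ∃ k, f a k = true :=
  (Partrec.rfind hf.partrec₂).dom_re.of_eq fun a => by simp

theorem REPred.and {p q : α → Prop} (hp : REPred p) (hq : REPred q) :
    REPred fun a => p a ∧ q a := by
  obtain ⟨f, hf, hpf⟩ := hp.exists_computable₂_bool
  obtain ⟨g, hg, hqg⟩ := hq.exists_computable₂_bool
  have h : Computable₂ fun a (m : ℕ) => f a m.unpair.1 && g a m.unpair.2 :=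
    (Primrec.and.to_comp.comp
      (hf.comp Computable.fst (Computable.fst.comp (Computable.unpair.comp Computable.snd)))
      (hg.comp Computable.fst (Computable.snd.comp (Computable.unpair.comp Computable.snd)))).to₂
  refine (REPred.exists_of_computable₂ h).of_eq fun a => ?_
  simp only [hpf, hqg, Bool.and_eq_true]
  exact ⟨fun ⟨m, hm⟩ => ⟨⟨_, hm.1⟩, ⟨_, hm.2⟩⟩,
    fun ⟨⟨k, hk⟩, ⟨l, hl⟩⟩ => ⟨Nat.pair k l, by simpa [Nat.unpair_pair] using ⟨hk, hl⟩⟩⟩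

theorem REPred.exists {r : α × β → Prop} (hr : REPred r) :
    REPred fun a => ∃ b, r (a, b) := by
  obtain ⟨f, hf, hrf⟩ := hr.exists_computable₂_bool
  have hdec : Computable fun q : α × ℕ => Encodable.decode (α := β) q.2.unpair.2 :=
    Computable.decode.comp (Computable.snd.comp (Computable.unpair.comp Computable.snd))
  have hstep : Computable₂ fun (q : α × ℕ) (b : β) => f (q.1, b) q.2.unpair.1 :=
    hf.comp (Computable.pair (Computable.fst.comp Computable.fst) Computable.snd)
      (Computable.fst.comp (Computable.unpair.comp (Computable.snd.comp Computable.fst)))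
  have h : Computable₂ fun a (m : ℕ) =>
      ((Encodable.decode (α := β) m.unpair.2).map fun b => f (a, b) m.unpair.1).getD false :=
    (Computable.option_getD (Computable.option_map hdec hstep) (Computable.const false)).to₂
  refine (REPred.exists_of_computable₂ h).of_eq fun a => ?_
  simp only [hrf]
  constructor
  · rintro ⟨m, hm⟩
    cases hb : Encodable.decode (α := β) m.unpair.2 with
    | none => simp [hb] at hm
    | some b => exact ⟨b, m.unpair.1, by simpa [hb] using hm⟩
  · rintro ⟨b, k, hk⟩
    exact ⟨Nat.pair k (Encodable.encode b), by simpa [Nat.unpair_pair, Encodable.encodek] using hk⟩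

end REPred

namespace FreeGroup

variable {α : Type*} [Primcodable α]

theorem primrec_invRev : Primrec (invRev : List (α × Bool) → List (α × Bool)) :=
  Primrec.list_reverse.comp (Primrec.list_map Primrec.id
    (Primrec.pair (Primrec.fst.comp Primrec.snd)
      ((Primrec.dom_bool Bool.not).comp (Primrec.snd.comp Primrec.snd))))

variable [DecidableEq α]

theorem primrec_reduce : Primrec (reduce : List (α × Bool) → List (α × Bool)) := by
  have hcancel : PrimrecRel fun x y : α × Bool => x.1 = y.1 ∧ x.2 = !y.2 :=
    PrimrecPred.and (Primrec.eq.comp (Primrec.fst.comp Primrec.fst) (Primrec.fst.comp Primrec.snd))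
      (Primrec.eq.comp (Primrec.snd.comp Primrec.fst)
        ((Primrec.dom_bool Bool.not).comp (Primrec.snd.comp Primrec.snd)))
  have hstep : Primrec₂ fun (_ : List (α × Bool))
      (p : (α × Bool) × List (α × Bool) × List (α × Bool)) =>
      @List.casesOn _ (fun _ => List (α × Bool)) p.2.2 [p.1] fun hd tl =>
        if p.1.1 = hd.1 ∧ p.1.2 = !hd.2 then tl else p.1 :: hd :: tl := by
    open Primrec in
    exact (list_casesOn (snd.comp (snd.comp snd)) (list_cons.comp (fst.comp snd) (const []))
      (Primrec.ite (hcancel.comp (fst.comp (snd.comp fst)) (fst.comp snd)) (snd.comp snd)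
        (list_cons.comp (fst.comp (snd.comp fst))
          (list_cons.comp (fst.comp snd) (snd.comp snd)))).to₂).to₂
  exact (Primrec.list_rec Primrec.id (Primrec.const []) hstep).of_eq fun L => rfl

theorem computablePred_mk_eq_one : ComputablePred fun L : List (α × Bool) => mk L = 1 :=
  (PrimrecPred.computablePred (Primrec.eq.comp primrec_reduce (Primrec.const []))).of_eq
    fun L => by rw [← toWord_eq_nil_iff, toWord_mk]

end FreeGroup

theorem Subgroup.notMem_iff_exists_ne_one_of_transversal {G : Type*} [Group G] {A : Subgroup G}
    {T : Set G} (hT : ∀ g : G, ∃! t, t ∈ T ∧ g * t⁻¹ ∈ A) (h1 : (1 : G) ∈ T) (g : G) :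
    g ∉ A ↔ ∃ t ∈ T, t ≠ 1 ∧ g * t⁻¹ ∈ A := by
  obtain ⟨t, ⟨htT, htA⟩, huniq⟩ := hT g
  constructor
  · intro hgA
    refine ⟨t, htT, ?_, htA⟩
    rintro rfl
    exact hgA (by simpa using htA)
  · rintro ⟨s, hsT, hs1, hsA⟩ hgA
    exact hs1 ((huniq s ⟨hsT, hsA⟩).trans (huniq 1 ⟨h1, by simpa using hgA⟩).symm)

theorem decidable_of_re_transversal_general {n : ℕ}
    (A : Subgroup (FreeGroup (Fin n))) (T : Set (FreeGroup (Fin n)))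
    (hT : ∀ g : FreeGroup (Fin n), ∃! t, t ∈ T ∧ g * t⁻¹ ∈ A)
    (h1 : (1 : FreeGroup (Fin n)) ∈ T)
    (hAre : REPred (fun L : List (Fin n × Bool) => FreeGroup.mk L ∈ A))
    (hTre : REPred (fun L : List (Fin n × Bool) => FreeGroup.mk L ∈ T)) :
    ComputablePred (fun L : List (Fin n × Bool) => FreeGroup.mk L ∈ A) := by
  refine ComputablePred.computable_iff_re_compl_re'.2 ⟨hAre, ?_⟩
  have hwitness : REPred fun p : List (Fin n × Bool) × List (Fin n × Bool) =>
      mk p.2 ∈ T ∧ mk p.2 ≠ 1 ∧ mk (p.1 ++ invRev p.2) ∈ A :=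
    (hTre.comp Computable.snd).and <|
      (computablePred_mk_eq_one.not.to_re.comp Computable.snd).and <|
        hAre.comp (Primrec.list_append.comp Primrec.fst (primrec_invRev.comp Primrec.snd)).to_comp
  have mk_surjective : Function.Surjective (mk : List (Fin n × Bool) → FreeGroup (Fin n)) :=
    fun g => ⟨g.toWord, mk_toWord⟩
  refine hwitness.exists.of_eq fun L => ?_
  rw [Subgroup.notMem_iff_exists_ne_one_of_transversal hT h1, mk_surjective.exists]
  simp only [← mul_mk, ← inv_mk]

/-- If `T` contains exactly one representative of each right coset of `A` and
both membership in `A` and membership in `T` (as predicates on reduced words)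
are recursively enumerable, then membership in `A` is decidable. -/
theorem decidable_of_re_transversal {n : ℕ} (hn : 1 ≤ n)
    (A : Subgroup (FreeGroup (Fin n))) (T : Set (FreeGroup (Fin n)))
    (hT : ∀ g : FreeGroup (Fin n), ∃! t, t ∈ T ∧ g * t⁻¹ ∈ A)
    (h1 : (1 : FreeGroup (Fin n)) ∈ T)
    (hAre : REPred (fun L : List (Fin n × Bool) => FreeGroup.mk L ∈ A))
    (hTre : REPred (fun L : List (Fin n × Bool) => FreeGroup.mk L ∈ T)) :
    ComputablePred (fun L : List (Fin n × Bool) => FreeGroup.mk L ∈ A) :=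
  decidable_of_re_transversal_general A T hT h1 hAre hTre
end
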